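/- Let $\varphi(\alpha) = \alpha - \int_{(0,\infty)}(1-e^{-\alpha x})\nu(dx)$ with $\varphi'(0) > 0$ and $\varphi^{(2)}(0) = \int x^2 \nu(dx) < \infty$. Then for all $\alpha > 0$: $-\frac{1}{\varphi(\alpha)} + \frac{\alpha \varphi'(0)}{\varphi(\alpha)^2} \leq 0$ and $\frac{\alpha}{\varphi(\alpha)}\cdot\frac{\varphi^{(2)}(0)}{2\varphi'(0)} \leq \frac{\varphi^{(2)}(0)}{2(\varphi'(0))^2}$; hence $-\frac{1}{\varphi(\alpha)} + \frac{\alpha\varphi'(0)}{\varphi(\alpha)^2} + \frac{\alpha}{\varphi(\alpha)}\cdot\frac{\varphi^{(2)}(0)}{2\varphi'(0)} \leq \frac{\varphi^{(2)}(0)}{2(\varphi'(0))^2}$. -/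
import Mathlib


open MeasureTheory

theorem stmt_11 (ν : Measure ℝ)
    (hx : IntegrableOn (fun x => x) (Set.Ioi 0) ν)
    (hx2 : IntegrableOn (fun x => x^2) (Set.Ioi 0) ν)
    (φ : ℝ → ℝ)
    (hφ : ∀ α, φ α = α - ∫ x in Set.Ioi (0:ℝ), (1 - Real.exp (-α * x)) ∂ν)
    (c1 c2 : ℝ)
    (hc1 : c1 = 1 - ∫ x in Set.Ioi (0:ℝ), x ∂ν)
    (hc2 : c2 = ∫ x in Set.Ioi (0:ℝ), x^2 ∂ν)
    (hpos : 0 < c1) :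
    ∀ α > (0:ℝ),
      -(1/φ α) + α * c1 / (φ α)^2 ≤ 0 ∧
      α / φ α * (c2 / (2*c1)) ≤ c2 / (2 * c1^2) ∧
      -(1/φ α) + α * c1 / (φ α)^2 + α / φ α * (c2 / (2*c1)) ≤ c2 / (2 * c1^2) := by
  intro α hα
  have hc2nn : 0 ≤ c2 := by
    rw [hc2]
    exact setIntegral_nonneg measurableSet_Ioi (fun x _ => sq_nonneg x)
  -- pointwise bound: 1 - exp(-αx) ≤ αx
  have hpt : ∀ x : ℝ, 1 - Real.exp (-α * x) ≤ α * x := by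
    intro x
    have := Real.add_one_le_exp (-α * x)
    linarith
  have hptnn : ∀ x ∈ Set.Ioi (0:ℝ), 0 ≤ 1 - Real.exp (-α * x) := by
    intro x hxx
    have : Real.exp (-α * x) ≤ 1 := by
      rw [Real.exp_le_one_iff]
      have : 0 < x := hxx
      nlinarith
    linarith
  have hgint : IntegrableOn (fun x => α * x) (Set.Ioi 0) ν := hx.const_mul α
  have hfint : IntegrableOn (fun x => 1 - Real.exp (-α * x)) (Set.Ioi 0) ν := by
    apply Integrable.mono hgint
    · exact ((measurable_const.sub
        ((measurable_id.const_mul (-α)).exp)).aestronglyMeasurable)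
    · filter_upwards [ae_restrict_mem measurableSet_Ioi] with x hxx
      have h1 : 0 ≤ 1 - Real.exp (-α * x) := hptnn x hxx
      have h2 : (1:ℝ) - Real.exp (-α * x) ≤ α * x := hpt x
      have h3 : 0 ≤ α * x := le_trans h1 h2
      rw [Real.norm_eq_abs, Real.norm_eq_abs, abs_of_nonneg h1, abs_of_nonneg h3]
      exact h2
  -- key: φ α ≥ α * c1
  have hint : (∫ x in Set.Ioi (0:ℝ), (1 - Real.exp (-α * x)) ∂ν)
      ≤ ∫ x in Set.Ioi (0:ℝ), α * x ∂ν :=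
    setIntegral_mono_on hfint hgint measurableSet_Ioi (fun x _ => hpt x)
  have hkey : α * c1 ≤ φ α := by
    rw [hφ, hc1]
    have : (∫ x in Set.Ioi (0:ℝ), α * x ∂ν) = α * ∫ x in Set.Ioi (0:ℝ), x ∂ν :=
      integral_const_mul α _
    rw [this] at hint
    rw [mul_sub, mul_one]
    linarith
  have hφpos : 0 < φ α := lt_of_lt_of_le (by positivity) hkey
  have h1 : -(1/φ α) + α * c1 / (φ α)^2 ≤ 0 := by
    have : α * c1 / (φ α)^2 ≤ 1 / φ α := by
      rw [div_le_div_iff₀ (by positivity) hφpos]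
      nlinarith
    linarith
  have h2 : α / φ α * (c2 / (2*c1)) ≤ c2 / (2 * c1^2) := by
    have hfrac : α / φ α ≤ 1 / c1 := by
      rw [div_le_div_iff₀ hφpos hpos]
      linarith
    have : α / φ α * (c2 / (2*c1)) ≤ (1/c1) * (c2 / (2*c1)) := by
      apply mul_le_mul_of_nonneg_right hfrac (by positivity)
    calc α / φ α * (c2 / (2*c1)) ≤ (1/c1) * (c2 / (2*c1)) := this
      _ = c2 / (2 * c1^2) := by rw [div_mul_div_comm, one_mul]; ring_nf
  exact ⟨h1, h2, by linarith⟩
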